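/- Let I ⊆ ℝ^k be a finite set of ideal points and let B(c,r) be a yolk of I. Then there exists a set ℋ' of at most k+1 median hyperplanes of I such that B(c,r) intersects every hyperplane in ℋ' and every closed ball intersecting every hyperplane in ℋ' has radius at least r (i.e., B(c,r) is a smallest ball intersecting every hyperplane in ℋ'). -/

import Mathlib

open scoped RealInnerProductSpace
open Real

noncomputable section

/-- Points of Euclidean space `ℝ^k`. -/
abbrev Pt (k : ℕ) := EuclideanSpace ℝ (Fin k)

/-- `(a, b)` (with `‖a‖ = 1`) is a median hyperplane for the finite set of ideal points `I`:
at least `|I|/2` points are on each closed side. -/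
def IsMedianHyperplane {k : ℕ} (I : Finset (Pt k)) (a : Pt k) (b : ℝ) : Prop :=
  ‖a‖ = 1 ∧
    (I.card : ℝ) / 2 ≤ ((I.filter fun x => ⟪a, x⟫ ≤ b).card : ℝ) ∧
    (I.card : ℝ) / 2 ≤ ((I.filter fun x => b ≤ ⟪a, x⟫).card : ℝ)

/-- A limiting median hyperplane for `I ⊆ ℝ^k` is a median hyperplane containing at least
`k` points of `I`. -/
def IsLimitingMedianHyperplane {k : ℕ} (I : Finset (Pt k)) (a : Pt k) (b : ℝ) : Prop :=
  IsMedianHyperplane I a b ∧ k ≤ (I.filter fun x => ⟪a, x⟫ = b).card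

/-- The yolk radius: infimum of `r ≥ 0` such that some closed ball `B(c,r)` intersects
every median hyperplane of `I` (the ball `B(c,r)` meets `H(a,b)` iff `|⟪a,c⟫ - b| ≤ r`). -/
def yolkRadius {k : ℕ} (I : Finset (Pt k)) : ℝ :=
  sInf {r : ℝ | 0 ≤ r ∧ ∃ c : Pt k, ∀ a b, IsMedianHyperplane I a b → |⟪a, c⟫ - b| ≤ r}

/-- The LP yolk radius: infimum of `r ≥ 0` such that some closed ball `B(c,r)` intersects
every limiting median hyperplane of `I`. -/
def lpYolkRadius {k : ℕ} (I : Finset (Pt k)) : ℝ :=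
  sInf {r : ℝ | 0 ≤ r ∧ ∃ c : Pt k, ∀ a b, IsLimitingMedianHyperplane I a b → |⟪a, c⟫ - b| ≤ r}

/-- `B(c,r)` is a yolk of `I`: it intersects every median hyperplane, and every closed ball
intersecting every median hyperplane has radius at least `r`. -/
def IsYolk {k : ℕ} (I : Finset (Pt k)) (c : Pt k) (r : ℝ) : Prop :=
  (∀ a b, IsMedianHyperplane I a b → |⟪a, c⟫ - b| ≤ r) ∧
  ∀ (c' : Pt k) (r' : ℝ),
    (∀ a b, IsMedianHyperplane I a b → |⟪a, c'⟫ - b| ≤ r') → r ≤ r'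

/-- `B(c,r)` is an LP yolk of `I`: it intersects every limiting median hyperplane, and every
closed ball intersecting every limiting median hyperplane has radius at least `r`. -/
def IsLPYolk {k : ℕ} (I : Finset (Pt k)) (c : Pt k) (r : ℝ) : Prop :=
  (∀ a b, IsLimitingMedianHyperplane I a b → |⟪a, c⟫ - b| ≤ r) ∧
  ∀ (c' : Pt k) (r' : ℝ),
    (∀ a b, IsLimitingMedianHyperplane I a b → |⟪a, c'⟫ - b| ≤ r') → r ≤ r'


/-! For `ρ < r`, the slabs `{x | |⟪a, x⟫ - b| ≤ ρ}` of centres of radius-`ρ` balls meeting the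
median hyperplanes `(a, b)` have empty intersection. The median hyperplanes orthogonal to the
coordinate axes cut out a bounded box, so by compactness finitely many slabs, and then by Helly's
theorem `k + 1` of them, already have empty intersection. The median hyperplanes of a nonempty `I`
form a compact set, so the `(k + 1)`-tuples found for `ρ` increasing to `r` accumulate at a tuple
that no ball of radius less than `r` meets entirely. -/

open Finset Module

namespace Finset

theorem exists_median {α : Type*} {s : Finset α} (hs : s.Nonempty) (f : α → ℝ) :
    ∃ b, (#s : ℝ) / 2 ≤ #{x ∈ s | f x ≤ b} ∧ (#s : ℝ) / 2 ≤ #{x ∈ s | b ≤ f x} := by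
  set T := {t ∈ s.image f | (#s : ℝ) / 2 ≤ #{x ∈ s | f x ≤ t}}
  have hT : T.Nonempty := by
    obtain ⟨y, hy, hmax⟩ := s.exists_max_image f hs
    refine ⟨f y, mem_filter.2 ⟨mem_image_of_mem f hy, ?_⟩⟩
    rw [filter_true_of_mem hmax]
    linarith [(#s).cast_nonneg (α := ℝ)]
  refine ⟨T.min' hT, (mem_filter.1 (T.min'_mem hT)).2, ?_⟩
  have hsplit := card_filter_add_card_filter_not (s := s) (T.min' hT ≤ f ·)
  simp only [not_le] at hsplit
  suffices (#{x ∈ s | f x < T.min' hT} : ℝ) ≤ #s / 2 by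
    rw [← hsplit] at this ⊢; push_cast at this ⊢; linarith
  rcases (s.filter (f · < T.min' hT)).eq_empty_or_nonempty with hlow | hlow
  · rw [hlow, card_empty, Nat.cast_zero]; positivity
  -- the values below `T.min' hT` all lie at or below the largest of them, which is not in `T`
  obtain ⟨y, hy, hmax⟩ := (s.filter (f · < T.min' hT)).exists_max_image f hlow
  have hyT : f y ∉ T := fun h => (not_le.2 (mem_filter.1 hy).2) (T.min'_le _ h)
  have hsame : {x ∈ s | f x < T.min' hT} = {x ∈ s | f x ≤ f y} := by
    refine filter_congr fun x hx => ⟨fun h => hmax x (mem_filter.2 ⟨hx, h⟩), fun h => ?_⟩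
    exact h.trans_lt (mem_filter.1 hy).2
  rw [hsame]
  simp only [T, mem_filter, mem_image_of_mem f (mem_filter.1 hy).1, true_and, not_le] at hyT
  exact hyT.le

theorem exists_of_card_div_two_le_card_filter {α : Type*} {s : Finset α} (hs : s.Nonempty)
    {p : α → Prop} [DecidablePred p] (h : (#s : ℝ) / 2 ≤ #{x ∈ s | p x}) : ∃ x ∈ s, p x := by
  have hpos : 0 < #{x ∈ s | p x} := by
    have := hs.card_pos
    exact_mod_cast (show (0 : ℝ) < #s / 2 by positivity).trans_le h
  simpa [Finset.Nonempty] using card_pos.1 hpos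

end Finset

theorem isClosed_setOf_le_card_filter {X α : Type*} [TopologicalSpace X] (s : Finset α)
    (P : X → α → Prop) [∀ p, DecidablePred (P p)] (hP : ∀ x, IsClosed {p | P p x}) (m : ℝ) :
    IsClosed {p | m ≤ #{x ∈ s | P p x}} := by
  classical
  have hunion : {p | m ≤ #{x ∈ s | P p x}} =
      ⋃ t ∈ {t ∈ s.powerset | m ≤ #t}, ⋂ x ∈ t, {p | P p x} := by
    ext p
    simp only [Set.mem_ofPred_eq, Set.mem_iUnion, Set.mem_iInter, mem_filter, mem_powerset,
      exists_prop]
    refine ⟨fun h => ⟨_, ⟨filter_subset _ _, h⟩, fun x hx => (mem_filter.1 hx).2⟩, ?_⟩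
    rintro ⟨t, ⟨hts, hm⟩, ht⟩
    exact hm.trans (by exact_mod_cast card_le_card fun x hx => mem_filter.2 ⟨hts hx, ht x hx⟩)
  rw [hunion]
  exact isClosed_biUnion_finset fun t _ => isClosed_biInter fun x _ => hP x

theorem exists_fin_iInter_eq_empty_of_isBounded {E ι : Type*} [NormedAddCommGroup E]
    [NormedSpace ℝ E] [FiniteDimensional ℝ E] {F : ι → Set E} (hconv : ∀ i, Convex ℝ (F i))
    (hclosed : ∀ i, IsClosed (F i)) {s₀ : Finset ι}
    (hbdd : Bornology.IsBounded (⋂ i ∈ s₀, F i)) (hF : ⋂ i, F i = ∅) {n : ℕ}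
    (hn : finrank ℝ E ≤ n) : ∃ q : Fin (n + 1) → ι, ⋂ j, F (q j) = ∅ := by
  classical
  have hK : IsCompact (⋂ i ∈ s₀, F i) :=
    Metric.isCompact_of_isClosed_isBounded (isClosed_biInter fun i _ => hclosed i) hbdd
  obtain ⟨t, ht⟩ := hK.elim_finite_subfamily_closed F hclosed (by rw [hF, Set.inter_empty])
  have hst : ⋂ i ∈ s₀ ∪ t, F i = ∅ := by rwa [set_biInter_inter]
  obtain ⟨s, -, hcard, hs⟩ : ∃ s ⊆ s₀ ∪ t, #s ≤ n + 1 ∧ ⋂ i ∈ s, F i = ∅ := by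
    by_contra! h
    exact (Convex.helly_theorem' (fun i _ => hconv i) fun s hs hcard =>
      h s hs (by omega)).ne_empty hst
  have : Nonempty s := by
    by_contra! h
    simp [Finset.isEmpty_coe_sort.1 h] at hs
  obtain ⟨e⟩ : Nonempty (s ↪ Fin (n + 1)) :=
    Function.Embedding.nonempty_of_card_le (by simpa using hcard)
  refine ⟨fun j => (Function.invFun e j).1, ?_⟩
  rw [(Function.invFun_surjective e.injective).iInter_comp (fun i : s => F i)]
  simpa [Set.iInter_subtype] using hs

section Slab

variable {E : Type*} [NormedAddCommGroup E] [InnerProductSpace ℝ E]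

/-- For `‖p.1‖ = 1`: the centres of the closed balls of radius `ρ` meeting `H(p.1, p.2)`. -/
def slab (p : E × ℝ) (ρ : ℝ) : Set E := {x | |⟪p.1, x⟫ - p.2| ≤ ρ}

theorem convex_slab (p : E × ℝ) (ρ : ℝ) : Convex ℝ (slab p ρ) := by
  have : slab p ρ = innerₛₗ ℝ p.1 ⁻¹' Set.Icc (p.2 - ρ) (p.2 + ρ) := by
    ext x; simp [slab, abs_sub_le_iff, add_comm, and_comm]
  rw [this]
  exact (convex_Icc _ _).linear_preimage _

theorem isClosed_slab (p : E × ℝ) (ρ : ℝ) : IsClosed (slab p ρ) :=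
  isClosed_le (by fun_prop) continuous_const

theorem isClosed_setOf_forall_exists_le_abs_inner_sub {ι : Type*} [Finite ι] (ρ : ℝ) :
    IsClosed {q : ι → E × ℝ | ∀ x, ∃ j, ρ ≤ |⟪(q j).1, x⟫ - (q j).2|} := by
  simp only [Set.ofPred_forall, Set.ofPred_exists]
  exact isClosed_iInter fun x =>
    isClosed_iUnion_of_finite fun j => isClosed_le continuous_const (by fun_prop)

end Slab

namespace EuclideanSpace

theorem isBounded_setOf_forall_abs_le {ι : Type*} [Fintype ι] (C : ℝ) :
    Bornology.IsBounded {x : EuclideanSpace ℝ ι | ∀ i, |x i| ≤ C} := by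
  refine isBounded_iff_forall_norm_le.2 ⟨√(Fintype.card ι * C ^ 2), fun x hx => ?_⟩
  refine (le_abs_self _).trans (Real.abs_le_sqrt ?_)
  calc ‖x‖ ^ 2 = ∑ i, |x i| ^ 2 := by simp [EuclideanSpace.norm_sq_eq]
    _ ≤ ∑ _ : ι, C ^ 2 := sum_le_sum fun i _ => pow_le_pow_left₀ (abs_nonneg _) (hx i) 2
    _ = Fintype.card ι * C ^ 2 := by simp

theorem isBounded_iInter_slab_single {ι : Type*} [Fintype ι] [DecidableEq ι] (b : ι → ℝ)
    (ρ : ℝ) : Bornology.IsBounded (⋂ i, slab (EuclideanSpace.single i (1 : ℝ), b i) ρ) := by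
  refine (isBounded_setOf_forall_abs_le (∑ i, |b i| + ρ)).subset fun x hx i => ?_
  have hxi : |x i - b i| ≤ ρ := by
    simpa [slab, EuclideanSpace.inner_single_left] using Set.mem_iInter.1 hx i
  calc |x i| = |(x i - b i) + b i| := by rw [sub_add_cancel]
    _ ≤ ρ + ∑ i, |b i| := (abs_add_le _ _).trans
      (add_le_add hxi (single_le_sum (fun j _ => abs_nonneg (b j)) (mem_univ i)))
    _ = ∑ i, |b i| + ρ := add_comm _ _

end EuclideanSpace

section MedianHyperplane

variable {k : ℕ} {I : Finset (Pt k)}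

theorem exists_isMedianHyperplane (hI : I.Nonempty) {a : Pt k} (ha : ‖a‖ = 1) :
    ∃ b, IsMedianHyperplane I a b :=
  (I.exists_median hI (⟪a, ·⟫)).imp fun _ hb => ⟨ha, hb⟩

theorem IsMedianHyperplane.abs_le_sum_norm (hI : I.Nonempty) {a : Pt k} {b : ℝ}
    (h : IsMedianHyperplane I a b) : |b| ≤ ∑ x ∈ I, ‖x‖ := by
  obtain ⟨ha, hle, hge⟩ := h
  have hnorm : ∀ x ∈ I, |⟪a, x⟫| ≤ ∑ x ∈ I, ‖x‖ := fun x hx =>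
    calc |⟪a, x⟫| ≤ ‖a‖ * ‖x‖ := abs_real_inner_le_norm a x
      _ = ‖x‖ := by rw [ha, one_mul]
      _ ≤ ∑ x ∈ I, ‖x‖ := single_le_sum (fun y _ => norm_nonneg y) hx
  obtain ⟨x, hx, hxb⟩ := exists_of_card_div_two_le_card_filter hI hle
  obtain ⟨y, hy, hyb⟩ := exists_of_card_div_two_le_card_filter hI hge
  exact abs_le.2 ⟨(abs_le.1 (hnorm x hx)).1.trans hxb, hyb.trans (abs_le.1 (hnorm y hy)).2⟩

variable (I) in
theorem isClosed_setOf_isMedianHyperplane :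
    IsClosed {p : Pt k × ℝ | IsMedianHyperplane I p.1 p.2} :=
  (isClosed_eq (by fun_prop) continuous_const).inter <|
    (isClosed_setOf_le_card_filter I _ (fun x => isClosed_le (by fun_prop) (by fun_prop)) _).inter
      (isClosed_setOf_le_card_filter I _ (fun x => isClosed_le (by fun_prop) (by fun_prop)) _)

theorem isCompact_setOf_isMedianHyperplane (hI : I.Nonempty) :
    IsCompact {p : Pt k × ℝ | IsMedianHyperplane I p.1 p.2} := by
  refine Metric.isCompact_of_isClosed_isBounded (isClosed_setOf_isMedianHyperplane I) ?_
  refine ((Metric.isBounded_closedBall (x := 0) (r := 1)).prod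
    (Metric.isBounded_closedBall (x := 0) (r := ∑ x ∈ I, ‖x‖))).subset fun p hp => ?_
  exact ⟨mem_closedBall_zero_iff.2 hp.1.le, mem_closedBall_zero_iff.2 (hp.abs_le_sum_norm hI)⟩

end MedianHyperplane

namespace IsYolk

variable {k : ℕ} {I : Finset (Pt k)} {c : Pt k} {r : ℝ}

theorem nonempty (h : IsYolk I c r) : I.Nonempty := by
  obtain ⟨a, b, hab⟩ : ∃ a b, IsMedianHyperplane I a b := by
    by_contra! hM
    linarith [h.2 c (r - 1) fun a b hab => (hM a b hab).elim]
  rw [Finset.nonempty_iff_ne_empty]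
  rintro rfl
  -- with no ideal points every hyperplane is a median hyperplane
  have hfar := h.1 a (⟪a, c⟫ + r + 1) ⟨hab.1, by simp, by simp⟩
  rw [show ⟪a, c⟫ - (⟪a, c⟫ + r + 1) = -(r + 1) by ring, abs_neg] at hfar
  linarith [le_abs_self (r + 1)]

theorem iInter_slab_eq_empty (h : IsYolk I c r) {ρ : ℝ} (hρ : ρ < r) :
    ⋂ p : {p : Pt k × ℝ // IsMedianHyperplane I p.1 p.2}, slab p.1 ρ = ∅ :=
  Set.eq_empty_of_forall_notMem fun x hx =>
    hρ.not_ge (h.2 x ρ fun a b hab => Set.mem_iInter.1 hx ⟨(a, b), hab⟩)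

theorem exists_fin_forall_lt_abs (h : IsYolk I c r) {ρ : ℝ} (hρ : ρ < r) :
    ∃ q : Fin (k + 1) → Pt k × ℝ, (∀ j, IsMedianHyperplane I (q j).1 (q j).2) ∧
      ∀ x, ∃ j, ρ < |⟪(q j).1, x⟫ - (q j).2| := by
  choose b hb using fun i : Fin k => exists_isMedianHyperplane h.nonempty
    ((PiLp.norm_single 2 _ i (1 : ℝ)).trans norm_one)
  let axes : Fin k → {p : Pt k × ℝ // IsMedianHyperplane I p.1 p.2} :=
    fun i => ⟨(EuclideanSpace.single i 1, b i), hb i⟩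
  have hbox : Bornology.IsBounded (⋂ p ∈ univ.image axes, slab p.1 ρ) := by
    simpa [set_biInter_finset_image, axes] using EuclideanSpace.isBounded_iInter_slab_single b ρ
  obtain ⟨q, hq⟩ := exists_fin_iInter_eq_empty_of_isBounded (fun p => convex_slab _ ρ)
    (fun p => isClosed_slab _ ρ) hbox (h.iInter_slab_eq_empty hρ) finrank_euclideanSpace_fin.le
  refine ⟨fun j => (q j).1, fun j => (q j).2, fun x => ?_⟩
  by_contra! hx
  exact Set.eq_empty_iff_forall_notMem.1 hq x (Set.mem_iInter.2 hx)

theorem exists_fin_forall_le_abs (h : IsYolk I c r) :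
    ∃ q : Fin (k + 1) → Pt k × ℝ, (∀ j, IsMedianHyperplane I (q j).1 (q j).2) ∧
      ∀ x, ∀ ρ < r, ∃ j, ρ ≤ |⟪(q j).1, x⟫ - (q j).2| := by
  let Q : Set.Iio r → Set (Fin (k + 1) → Pt k × ℝ) := fun ρ =>
    Set.univ.pi (fun _ => {p | IsMedianHyperplane I p.1 p.2}) ∩
      {q | ∀ x, ∃ j, ρ ≤ |⟪(q j).1, x⟫ - (q j).2|}
  have hQ : ∀ ρ, IsCompact (Q ρ) := fun ρ =>
    (isCompact_univ_pi fun _ => isCompact_setOf_isMedianHyperplane h.nonempty).inter_right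
      (isClosed_setOf_forall_exists_le_abs_inner_sub ρ)
  have : Nonempty (Set.Iio r) := ⟨⟨r - 1, by simp⟩⟩
  obtain ⟨q, hq⟩ := IsCompact.nonempty_iInter_of_directed_nonempty_isCompact_isClosed Q
    (Antitone.directed_ge fun ρ σ hρσ => Set.inter_subset_inter_right _
      fun q hq x => (hq x).imp fun _ => (show (ρ : ℝ) ≤ σ from hρσ).trans)
    (fun ρ => let ⟨q, hM, hq⟩ := h.exists_fin_forall_lt_abs ρ.2
      ⟨q, fun j _ => hM j, fun x => (hq x).imp fun _ => le_of_lt⟩)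
    hQ fun ρ => (hQ ρ).isClosed
  have hqQ := Set.mem_iInter.1 hq
  exact ⟨q, fun j => (hqQ (Classical.arbitrary _)).1 j trivial, fun x ρ hρ => (hqQ ⟨ρ, hρ⟩).2 x⟩

end IsYolk

/-- If `B(c,r)` is a yolk of a finite `I ⊆ ℝ^k`, then some set `ℋ'` of at most
`k+1` median hyperplanes of `I` is intersected by `B(c,r)` and already forces radius `r`:
every closed ball intersecting all hyperplanes of `ℋ'` has radius at least `r`. -/
theorem yolk_defined_by_k_plus_one_hyperplanes {k : ℕ} (I : Finset (Pt k))
    (c : Pt k) (r : ℝ) (hyolk : IsYolk I c r) :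
    ∃ H' : Finset (Pt k × ℝ), H'.card ≤ k + 1 ∧
      (∀ p ∈ H', IsMedianHyperplane I p.1 p.2) ∧
      (∀ p ∈ H', |⟪p.1, c⟫ - p.2| ≤ r) ∧
      ∀ (c' : Pt k) (r' : ℝ), (∀ p ∈ H', |⟪p.1, c'⟫ - p.2| ≤ r') → r ≤ r' := by
  obtain ⟨q, hqM, hq⟩ := hyolk.exists_fin_forall_le_abs
  refine ⟨univ.image q, card_image_le.trans (by simp), ?_, ?_, fun c' r' hc' => ?_⟩
  · simpa using hqM
  · simpa using fun j => hyolk.1 _ _ (hqM j)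
  · refine le_of_forall_lt_imp_le_of_dense fun ρ hρ => ?_
    obtain ⟨j, hj⟩ := hq c' ρ hρ
    exact hj.trans (hc' (q j) (mem_image_of_mem q (mem_univ j)))
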